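/- Let φ be a nilpotent R-endomorphism of a finitely generated semisimple left R-module M with Jordan normal base {x_{γ,i}}, γ ∈ Γ finite, and Φ as above. Then M(Φ) = {P ∈ M_{Γ×Γ}(R[t]) | fP ∈ ker(Φ) for all f ∈ ker(Φ)} is a Z(R)-subalgebra of M_{Γ×Γ}(R[t]), and for each P ∈ M(Φ) the rule ψ_P(Φ(f)) = Φ(fP) is a well-defined R-endomorphism of M commuting with φ; moreover P ↦ ψ_P is a Z(R)-algebra homomorphism from M(Φ)^op to C_φ. -/

import Mathlib

open Polynomial

/-- A nilpotent Jordan normal base of the left `R`-module `M` with respect to the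
endomorphism `φ`: a family `x γ i` (`γ ∈ Γ`, `0 ≤ i < k γ`, 0-based indexing) such that
each `R • x γ i` is a simple submodule, `M` is the internal direct sum of these submodules,
`φ` shifts within each block (annihilating the last element, i.e. `x γ i = 0` for `i ≥ k γ`),
and the block sizes `k γ` are bounded. -/
structure IsNilpotentJordanBase {R : Type*} [Ring R] {M : Type*} [AddCommGroup M] [Module R M]
    (φ : Module.End R M) {Γ : Type*} (k : Γ → ℕ) (x : Γ → ℕ → M) : Prop where
  k_pos : ∀ γ, 1 ≤ k γ
  simple : ∀ γ, ∀ i < k γ, IsSimpleModule R ↥(Submodule.span R {x γ i})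
  indep : iSupIndep fun p : Σ γ : Γ, Fin (k γ) => Submodule.span R {x p.1 p.2.val}
  spans : (⨆ p : Σ γ : Γ, Fin (k γ), Submodule.span R {x p.1 p.2.val}) = ⊤
  step : ∀ γ i, φ (x γ i) = x γ (i + 1)
  zero_after : ∀ γ i, k γ ≤ i → x γ i = 0
  bounded : ∃ n, ∀ γ, k γ ≤ n

/-- The action of a polynomial `f = a₁ + a₂ t + ⋯ + a_{n+1} tⁿ ∈ R[t]` on `u ∈ M` induced by
the endomorphism `φ`: `f ∗ u = a₁ u + a₂ φ(u) + ⋯ + a_{n+1} φⁿ(u)`. -/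
noncomputable def polyAction {R : Type*} [Ring R] {M : Type*} [AddCommGroup M] [Module R M]
    (φ : Module.End R M) (f : Polynomial R) (u : M) : M :=
  f.sum fun i a => a • (φ ^ i) u

/-- The map `Φ : (R[t])^Γ → M`, `Φ((f_γ)_γ) = Σ_γ f_γ(t) ∗ x_{γ,1}`, associated to a
nilpotent Jordan normal base `x` with finite block set `Γ`. -/
noncomputable def jordanPhiF {R : Type*} [Ring R] {M : Type*} [AddCommGroup M] [Module R M]
    (φ : Module.End R M) {Γ : Type*} [Fintype Γ] (x : Γ → ℕ → M) (f : Γ → Polynomial R) : M :=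
  ∑ γ, polyAction φ (f γ) (x γ 0)

/-!
Since `Φ` is surjective, `M ≅ (R[t])^Γ ⧸ ker Φ`. A matrix `P` lies in `M(Φ)` exactly when right
multiplication by `P` preserves `ker Φ`, and endomorphisms preserving a submodule form a
subalgebra acting on the quotient; transporting along `Φ` gives `ψ_P`. Right multiplication by
the central scalar matrix `t • 1` descends to `φ` and commutes with every right multiplication,
so each `ψ_P` commutes with `φ`.
-/

namespace Submodule

variable (S : Type*) {R V : Type*} [CommSemiring S] [Ring R] [Algebra S R] [AddCommGroup V]
  [Module R V] [Module S V] [IsScalarTower S R V]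

def stabilizerSubalgebra (p : Submodule R V) : Subalgebra S (Module.End R V) where
  carrier := {T | p ≤ p.comap T}
  mul_mem' hT hU _ hv := hT (hU hv)
  one_mem' _ hv := hv
  add_mem' hT hU _ hv := p.add_mem (hT hv) (hU hv)
  zero_mem' _ _ := p.zero_mem
  algebraMap_mem' c _ hv := p.smul_of_tower_mem c hv

variable (p : Submodule R V)

noncomputable def mapQAlgHom : p.stabilizerSubalgebra S →ₐ[S] Module.End R (V ⧸ p) where
  toFun T := p.mapQ p T T.2
  map_one' := by ext; rfl
  map_mul' T U := by ext; rfl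
  map_zero' := by ext; rfl
  map_add' T U := by ext; rfl
  commutes' c := by ext; rfl

theorem mapQAlgHom_apply_mk (T : p.stabilizerSubalgebra S) (v : V) :
    mapQAlgHom S p T (Submodule.Quotient.mk v) = Submodule.Quotient.mk (T.1 v) := rfl

end Submodule

namespace LinearMap

variable (S : Type*) {R V M : Type*} [CommSemiring S] [Ring R] [Algebra S R] [AddCommGroup V]
  [Module R V] [Module S V] [IsScalarTower S R V] [AddCommGroup M] [Module R M] [Module S M]
  [IsScalarTower S R M] (Φ : V →ₗ[R] M) (hΦ : Function.Surjective Φ)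

noncomputable def descendAlgHom : (ker Φ).stabilizerSubalgebra S →ₐ[S] Module.End R M :=
  ((Φ.quotKerEquivOfSurjective hΦ).conjAlgEquiv S).toAlgHom.comp ((ker Φ).mapQAlgHom S)

variable {S Φ hΦ}

theorem descendAlgHom_apply (T : (ker Φ).stabilizerSubalgebra S) (v : V) :
    descendAlgHom S Φ hΦ T (Φ v) = Φ (T.1 v) := by
  simp only [descendAlgHom, AlgHom.coe_comp, AlgEquiv.coe_toAlgHom, Function.comp_apply,
    LinearEquiv.conjAlgEquiv_apply, coe_comp, LinearEquiv.coe_coe,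
    quotKerEquivOfSurjective_symm_apply, Submodule.mapQAlgHom_apply_mk,
    quotKerEquivOfSurjective_apply_mk]

theorem commute_descendAlgHom {T : (ker Φ).stabilizerSubalgebra S} {T₀ : Module.End R V}
    {B : Module.End R M} (hB : ∀ v, Φ (T₀ v) = B (Φ v)) (hT : Commute T₀ T.1) :
    Commute (descendAlgHom S Φ hΦ T) B := by
  refine LinearMap.ext (hΦ.forall.mpr fun v => ?_)
  simp only [Module.End.mul_apply, ← hB, descendAlgHom_apply]
  rw [← Module.End.mul_apply, ← hT.eq, Module.End.mul_apply]

end LinearMap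

namespace Matrix

variable (S : Type*) {R A n : Type*} [Fintype n] [DecidableEq n] [CommSemiring S] [Semiring R]
  [Semiring A] [Algebra S R] [Algebra S A] [Module R A] [IsScalarTower R A A] [IsScalarTower S R A]

def vecMulAlgHom : (Matrix n n A)ᵐᵒᵖ →ₐ[S] Module.End R (n → A) where
  toFun P := (toLinearMapRight' P.unop).restrictScalars R
  map_one' := by ext; simp
  map_mul' P Q := by ext; simp
  map_zero' := by ext; simp
  map_add' P Q := by ext; simp
  commutes' c := LinearMap.ext fun v => funext fun i => by
    simp [algebraMap_eq_diagonal, vecMul_diagonal, Algebra.smul_def, Algebra.commutes]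

variable {S}

@[simp]
theorem vecMulAlgHom_apply (P : Matrix n n A) (f : n → A) :
    vecMulAlgHom (R := R) S (MulOpposite.op P) f = f ᵥ* P := rfl

end Matrix

open Matrix

namespace LinearMap

variable (S : Type*) {R A M n : Type*} [CommSemiring S] [Ring R] [Ring A] [Algebra S R]
  [Algebra S A] [Module R A] [IsScalarTower R A A] [IsScalarTower S R A] [AddCommGroup M]
  [Module R M] [Fintype n] [DecidableEq n] (Φ : (n → A) →ₗ[R] M)

def vecMulStabilizer : Subalgebra S (Matrix n n A) :=
  (((ker Φ).stabilizerSubalgebra S).comap (Matrix.vecMulAlgHom S)).unop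

variable {S Φ}

theorem mem_vecMulStabilizer {P : Matrix n n A} :
    P ∈ Φ.vecMulStabilizer S ↔ ∀ f, Φ f = 0 → Φ (f ᵥ* P) = 0 := Iff.rfl

variable (S) [Module S M] [IsScalarTower S R M] (hΦ : Function.Surjective Φ)

noncomputable def vecMulDescend : (Φ.vecMulStabilizer S)ᵐᵒᵖ →ₐ[S] Module.End R M :=
  (descendAlgHom S Φ hΦ).comp <|
    (((Matrix.vecMulAlgHom S).comp (Φ.vecMulStabilizer S).op.val).codRestrict _ fun P => P.2).comp
      (Φ.vecMulStabilizer S).mopAlgEquivOp.toAlgHom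

variable {S}

theorem vecMulDescend_apply (P : Φ.vecMulStabilizer S) (f : n → A) :
    vecMulDescend S hΦ (MulOpposite.op P) (Φ f) = Φ (f ᵥ* P) :=
  descendAlgHom_apply _ f

theorem commute_vecMulDescend {a : A} (ha : ∀ b, Commute a b) {B : Module.End R M}
    (hB : ∀ f, Φ (fun i => f i * a) = B (Φ f)) (P : Φ.vecMulStabilizer S) :
    Commute (vecMulDescend S hΦ (MulOpposite.op P)) B := by
  refine commute_descendAlgHom (T₀ := Matrix.vecMulAlgHom S (MulOpposite.op (Matrix.scalar n a)))
    (fun f => ?_) ?_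
  · rw [← hB]; congr 1; ext i; simp [vecMul_diagonal]
  · exact ((Matrix.scalar_commute a ha P.1).op).map _

end LinearMap

section Jordan

variable {R M Γ : Type*} [Ring R] [AddCommGroup M] [Module R M] (φ : Module.End R M)

theorem polyAction_eq_lsum (f : R[X]) (u : M) :
    polyAction φ f u = lsum (fun i => LinearMap.toSpanSingleton R M ((φ ^ i) u)) f := rfl

theorem polyAction_mul_X (f : R[X]) (u : M) : polyAction φ (f * X) u = φ (polyAction φ f u) := by
  induction f using Polynomial.induction_on' with
  | add p q hp hq =>
    simp only [polyAction_eq_lsum] at hp hq ⊢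
    rw [add_mul, map_add, map_add, hp, hq, map_add]
  | monomial n a => simp [polyAction_eq_lsum, pow_succ']

variable [Fintype Γ]

noncomputable def jordanPhi (x : Γ → ℕ → M) : (Γ → R[X]) →ₗ[R] M :=
  ∑ γ, lsum (fun i => LinearMap.toSpanSingleton R M ((φ ^ i) (x γ 0))) ∘ₗ LinearMap.proj γ

theorem jordanPhi_apply (x : Γ → ℕ → M) (f : Γ → R[X]) :
    jordanPhi φ x f = jordanPhiF φ x f := by
  simp [jordanPhi, jordanPhiF, polyAction_eq_lsum]

theorem jordanPhi_mul_X (x : Γ → ℕ → M) (f : Γ → R[X]) :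
    jordanPhi φ x (fun γ => f γ * X) = φ (jordanPhi φ x f) := by
  simp only [jordanPhi_apply, jordanPhiF, polyAction_mul_X, map_sum]

end Jordan

namespace IsNilpotentJordanBase

variable {R M Γ : Type*} [Ring R] [AddCommGroup M] [Module R M] {φ : Module.End R M}
  {k : Γ → ℕ} {x : Γ → ℕ → M}

theorem pow_apply (h : IsNilpotentJordanBase φ k x) (γ : Γ) (i : ℕ) :
    (φ ^ i) (x γ 0) = x γ i := by
  induction i with
  | zero => rfl
  | succ i ih => rw [pow_succ', Module.End.mul_apply, ih, h.step]

variable [Fintype Γ] [DecidableEq Γ]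

theorem jordanPhi_single (h : IsNilpotentJordanBase φ k x) (γ : Γ) (i : ℕ) :
    jordanPhi φ x (Pi.single γ (monomial i 1)) = x γ i := by
  simp [jordanPhi_apply, jordanPhiF, Pi.single_apply, apply_ite, polyAction_eq_lsum, h.pow_apply]

theorem jordanPhi_surjective (h : IsNilpotentJordanBase φ k x) :
    Function.Surjective (jordanPhi φ x) := by
  rw [← LinearMap.range_eq_top, eq_top_iff, ← h.spans]
  exact iSup_le fun p => (Submodule.span_singleton_le_iff_mem _ _).mpr
    ⟨_, h.jordanPhi_single p.1 p.2⟩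

end IsNilpotentJordanBase

theorem stmt_11_general {R : Type*} [Ring R] {M : Type*} [AddCommGroup M] [Module R M]
    (φ : Module.End R M) {Γ : Type*} [Fintype Γ] [DecidableEq Γ] (k : Γ → ℕ) (x : Γ → ℕ → M)
    (h : IsNilpotentJordanBase φ k x) :
    ∃ S : Subalgebra (Subring.center R) (Matrix Γ Γ (Polynomial R)),
      (∀ P : Matrix Γ Γ (Polynomial R), P ∈ S ↔
        ∀ f : Γ → Polynomial R, jordanPhiF φ x f = 0 → jordanPhiF φ x (Matrix.vecMul f P) = 0) ∧
      ∃ Ψ : (↥S)ᵐᵒᵖ →ₐ[Subring.center R] Module.End R M,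
        (∀ P : ↥S, Ψ (MulOpposite.op P) * φ = φ * Ψ (MulOpposite.op P)) ∧
        (∀ (P : ↥S) (f : Γ → Polynomial R),
          Ψ (MulOpposite.op P) (jordanPhiF φ x f) =
            jordanPhiF φ x (Matrix.vecMul f (P : Matrix Γ Γ (Polynomial R)))) := by
  have hΦ := h.jordanPhi_surjective
  refine ⟨(jordanPhi φ x).vecMulStabilizer (Subring.center R), fun P => ?_,
    LinearMap.vecMulDescend _ hΦ, fun P => ?_, fun P f => ?_⟩
  · simp only [LinearMap.mem_vecMulStabilizer, jordanPhi_apply]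
  · exact (LinearMap.commute_vecMulDescend hΦ commute_X (jordanPhi_mul_X φ x) P).eq
  · simpa only [jordanPhi_apply] using LinearMap.vecMulDescend_apply hΦ P f

/-- `M(Φ) = {P | fP ∈ ker Φ for all f ∈ ker Φ}` is a `Z(R)`-subalgebra of `M_{Γ×Γ}(R[t])`,
for each `P ∈ M(Φ)` the rule `ψ_P(Φ(f)) = Φ(fP)` well-defines an `R`-endomorphism of `M`
commuting with `φ`, and `P ↦ ψ_P` is a `Z(R)`-algebra homomorphism `M(Φ)^op → C_φ`. -/
theorem stmt_11 {R : Type*} [Ring R] {M : Type*} [AddCommGroup M] [Module R M]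
    [Module.Finite R M] [IsSemisimpleModule R M]
    (φ : Module.End R M) {Γ : Type*} [Fintype Γ] [DecidableEq Γ] (k : Γ → ℕ) (x : Γ → ℕ → M)
    (h : IsNilpotentJordanBase φ k x) :
    ∃ S : Subalgebra (Subring.center R) (Matrix Γ Γ (Polynomial R)),
      (∀ P : Matrix Γ Γ (Polynomial R), P ∈ S ↔
        ∀ f : Γ → Polynomial R, jordanPhiF φ x f = 0 → jordanPhiF φ x (Matrix.vecMul f P) = 0) ∧
      ∃ Ψ : (↥S)ᵐᵒᵖ →ₐ[Subring.center R] Module.End R M,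
        (∀ P : ↥S, Ψ (MulOpposite.op P) * φ = φ * Ψ (MulOpposite.op P)) ∧
        (∀ (P : ↥S) (f : Γ → Polynomial R),
          Ψ (MulOpposite.op P) (jordanPhiF φ x f) =
            jordanPhiF φ x (Matrix.vecMul f (P : Matrix Γ Γ (Polynomial R)))) :=
  stmt_11_general φ k x h
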